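/- Let d = 2, n = 4, with positions x_1 = (0,0), x_2 = (2,0), x_3 = (3,−4), x_4 = (2,−2) in ℝ², and directed edge set E = {(1,2), (2,4), (4,3), (3,1), (1,4)}. Define the 8×8 real matrix L_B in 2×2 blocks by (L_B)_{ii} = ∑_{j : (i,j) ∈ E} P(u_{ij}), (L_B)_{ij} = −P(u_{ij}) if (i,j) ∈ E, and (L_B)_{ij} = 0 otherwise, where u_{ij} = (x_j − x_i)/‖x_j − x_i‖ and P(v) = I₂ − v vᵀ. Then L_B has an eigenvalue with strictly negative real part (equivalently, −L_B has an eigenvalue with strictly positive real part). -/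

import Mathlib

open Finset

noncomputable section

/-- The positions `x_1 = (0,0)`, `x_2 = (2,0)`, `x_3 = (3,-4)`, `x_4 = (2,-2)` in `ℝ²`
(0-indexed as agents `0, 1, 2, 3`). -/
def pos13 : Fin 4 → Fin 2 → ℝ := ![![0, 0], ![2, 0], ![3, -4], ![2, -2]]

/-- The directed edge set `{(1,2), (2,4), (4,3), (3,1), (1,4)}` (0-indexed). -/
def edges13 : Finset (Fin 4 × Fin 4) := {(0, 1), (1, 3), (3, 2), (2, 0), (0, 3)}

/-- The bearing `u_{ij} = (x_j - x_i)/‖x_j - x_i‖` as a vector in `ℝ²`. -/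
def u13 (i j : Fin 4) : Fin 2 → ℝ :=
  fun a => (pos13 j a - pos13 i a) / Real.sqrt (∑ b, (pos13 j b - pos13 i b) ^ 2)

/-- The 2×2 projection matrix `P(v) = I₂ - v vᵀ`. -/
def proj13 (v : Fin 2 → ℝ) : Fin 2 → Fin 2 → ℝ :=
  fun a b => (if a = b then 1 else 0) - v a * v b

/-- The directed bearing Laplacian `L_B` as an 8×8 real matrix in 2×2 blocks:
the `(i,i)` block is `∑_{j : (i,j) ∈ E} P(u_{ij})`, the `(i,j)` block is `-P(u_{ij})`
if `(i,j) ∈ E`, and `0` otherwise. -/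
def LB13 : Matrix (Fin 4 × Fin 2) (Fin 4 × Fin 2) ℝ :=
  fun p q =>
    if p.1 = q.1 then
      ∑ k : Fin 4, if (p.1, k) ∈ edges13 then proj13 (u13 p.1 k) p.2 q.2 else 0
    else if (p.1, q.1) ∈ edges13 then -(proj13 (u13 p.1 q.1) p.2 q.2) else 0

/-
Each `P(u)` is the orthogonal projection onto `u^⊥`, so an eigenvector `v = (v₁, v₂, v₃, v₄)` of
`L_B` for an eigenvalue `t ∉ {0, 1}` has `v₂ ∥ (1, 0)`, `v₃ ∥ (4, 3)` and `v₄ ∥ (2, 1)`. Solving the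
block rows of agents 2, 4 and 1 in turn leaves the row of agent 3 as a single scalar condition,
`(1 - t) q(t) = 0` with `q(t) = t⁴ - 4t³ + 11/2 t² - 519/250 t - 7/250`, and `q(-1) > 0 > q(0)`.
-/

open Matrix

theorem proj13_div_sqrt_sum_sq (w : Fin 2 → ℝ) (a b : Fin 2) :
    proj13 (fun c => w c / √(∑ d, w d ^ 2)) a b
      = (if a = b then 1 else 0) - w a * w b / ∑ d, w d ^ 2 := by
  rw [proj13, div_mul_div_comm, ← sq, Real.sq_sqrt (by positivity)]

theorem proj13_u13 (i j : Fin 4) (a b : Fin 2) :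
    proj13 (u13 i j) a b = (if a = b then 1 else 0)
      - (pos13 j a - pos13 i a) * (pos13 j b - pos13 i b) / ∑ c, (pos13 j c - pos13 i c) ^ 2 :=
  proj13_div_sqrt_sum_sq (fun c => pos13 j c - pos13 i c) a b

-- The solution of the elimination above, with denominators cleared.
def evec13 (t : ℝ) : Fin 4 × Fin 2 → ℝ := fun p =>
  ![(33 * (1 - t)) • ![1 - t, -t],
    ![22 * (2 * t ^ 2 - 4 * t + 1), 0],
    (5 * (2 * t ^ 2 - 4 * t + 1) * (1 - t) ^ 2) • ![4, 3],
    (11 * (2 * t ^ 2 - 4 * t + 1) * (1 - t)) • ![2, 1]] p.1 p.2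

theorem evec13_ne_zero {t : ℝ} (ht : t < 0) : evec13 t ≠ 0 := fun h => by
  have h01 := congrFun h (0, 1)
  simp only [evec13, Pi.zero_apply] at h01
  norm_num at h01
  obtain h | h := h01 <;> linarith

theorem LB13_mulVec_evec13 {t : ℝ}
    (ht : t ^ 4 - 4 * t ^ 3 + 11 / 2 * t ^ 2 - 519 / 250 * t - 7 / 250 = 0) :
    LB13 *ᵥ evec13 t = t • evec13 t := by
  ext ⟨i, a⟩
  fin_cases i <;> fin_cases a <;>
    simp [mulVec, dotProduct, Fintype.sum_prod_type, Fin.sum_univ_four, LB13, edges13,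
      proj13_u13, pos13, evec13] <;> norm_num
  · ring
  · ring
  · ring
  · linear_combination (40 * (1 - t)) * ht
  · linear_combination (30 * (1 - t)) * ht
  · ring
  · ring

theorem Matrix.mem_spectrum_of_mulVec_eq {K n : Type*} [Field K] [Fintype n] [DecidableEq n]
    {A : Matrix n n K} {v : n → K} {μ : K} (hv : v ≠ 0) (h : A *ᵥ v = μ • v) :
    μ ∈ spectrum K A := by
  rw [← spectrum_toLin']
  exact (Module.End.hasEigenvalue_of_hasEigenvector
    ⟨Module.End.mem_eigenspace_iff.2 (by simpa using h), hv⟩).mem_spectrum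

theorem Matrix.map_mem_spectrum_map_of_mulVec_eq {K L n : Type*} [Field K] [Field L] [Fintype n]
    [DecidableEq n] (f : K →+* L) {A : Matrix n n K} {v : n → K} {μ : K} (hv : v ≠ 0)
    (h : A *ᵥ v = μ • v) : f μ ∈ spectrum L (A.map f) := by
  refine mem_spectrum_of_mulVec_eq (v := f ∘ v) (fun h0 => hv ?_) ?_
  · ext i
    simpa using congrFun h0 i
  · ext i
    simp [← RingHom.map_mulVec, h]

theorem exists_neg_root_quartic13 :
    ∃ t : ℝ, t < 0 ∧ t ^ 4 - 4 * t ^ 3 + 11 / 2 * t ^ 2 - 519 / 250 * t - 7 / 250 = 0 := by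
  obtain ⟨t, ⟨-, ht_nonpos⟩, ht⟩ := intermediate_value_Icc' (a := -1) (b := 0) (by norm_num)
    (f := fun t : ℝ => t ^ 4 - 4 * t ^ 3 + 11 / 2 * t ^ 2 - 519 / 250 * t - 7 / 250)
    (by fun_prop) (show (0 : ℝ) ∈ _ by norm_num)
  refine ⟨t, lt_of_le_of_ne ht_nonpos ?_, ht⟩
  rintro rfl
  norm_num at ht

theorem stmt_13 :
    ∃ μ : ℂ, μ ∈ spectrum ℂ (LB13.map (Complex.ofReal)) ∧ μ.re < 0 := by
  obtain ⟨t, ht_neg, ht⟩ := exists_neg_root_quartic13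
  exact ⟨t, map_mem_spectrum_map_of_mulVec_eq Complex.ofRealHom (evec13_ne_zero ht_neg)
    (LB13_mulVec_evec13 ht), by simpa using ht_neg⟩

end
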